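/- Let U be a finite set of anchor points in ℝ^d and γ : ℝ^d → U → ℝ a nonnegative weighting. Let f : ℝ^d → ℝ^D satisfy ‖f(x) - f(x')‖ ≤ α‖x - x'‖ and ‖f(x) - f(x') - (Df)(x')(x - x')‖ ≤ β‖x - x'‖^(1+p) for all x, x', where Df(x') is the (Fréchet) derivative of f at x', α, β > 0, p ∈ (0,1]. Then for all x ∈ ℝ^d: ‖f(x) - ∑_{u ∈ U} γ_u(x) f(u)‖ ≤ α‖x - ∑_{u ∈ U} γ_u(x) u‖ + β ∑_{u ∈ U} γ_u(x) ‖x - u‖^(1+p), provided ∑_{u ∈ U} γ_u(x) = 1. -/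
import Mathlib

/-- Lemma 1 (local metric approximation error bound): if `f` is an
`(α, β, p)`-Lipschitz smooth vector-valued function, then for any nonnegative
weighting `γ` on a finite set `U` of anchor points summing to one, the
approximation error of `f x` by the weighted combination of the `f u` is
bounded by `α ‖x - ∑ γ u • u‖ + β ∑ γ u ‖x - u‖^(1+p)`. -/
theorem local_metric_approximation_bound
    {d D : ℕ} (f : EuclideanSpace ℝ (Fin d) → EuclideanSpace ℝ (Fin D))
    (α β p : ℝ) (hα : 0 < α) (hβ : 0 < β) (hp0 : 0 < p) (hp1 : p ≤ 1)
    (hdiff : Differentiable ℝ f)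
    (hlip : ∀ x x' : EuclideanSpace ℝ (Fin d), ‖f x - f x'‖ ≤ α * ‖x - x'‖)
    (hsmooth : ∀ x x' : EuclideanSpace ℝ (Fin d),
      ‖f x - f x' - fderiv ℝ f x' (x - x')‖ ≤ β * ‖x - x'‖ ^ (1 + p))
    (U : Finset (EuclideanSpace ℝ (Fin d)))
    (γ : EuclideanSpace ℝ (Fin d) → EuclideanSpace ℝ (Fin d) → ℝ)
    (x : EuclideanSpace ℝ (Fin d))
    (hγ : ∀ u ∈ U, 0 ≤ γ x u)
    (hsum : ∑ u ∈ U, γ x u = 1) :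
    ‖f x - ∑ u ∈ U, γ x u • f u‖ ≤
      α * ‖x - ∑ u ∈ U, γ x u • u‖ + β * ∑ u ∈ U, γ x u * ‖x - u‖ ^ (1 + p) := by
  set L := fderiv ℝ f x with hL
  have hLnorm : ‖L‖ ≤ α := by
    apply norm_fderiv_le_of_lip' ℝ hα.le
    filter_upwards with y using hlip y x
  set E : EuclideanSpace ℝ (Fin d) → EuclideanSpace ℝ (Fin D) :=
    fun u => f x - f u - L (x - u) with hE
  have hEnorm : ∀ u, ‖E u‖ ≤ β * ‖x - u‖ ^ (1 + p) := by
    intro u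
    have h := hsmooth u x
    rw [norm_sub_rev x u] at *
    calc ‖E u‖ = ‖f u - f x - L (u - x)‖ := by
          rw [show E u = -(f u - f x - L (u - x)) by simp [hE]; abel, norm_neg]
      _ ≤ β * ‖u - x‖ ^ (1 + p) := h
  have h1 : x - ∑ u ∈ U, γ x u • u = ∑ u ∈ U, γ x u • (x - u) := by
    simp [smul_sub, Finset.sum_sub_distrib, ← Finset.sum_smul, hsum]
  have h2 : f x - ∑ u ∈ U, γ x u • f u
      = L (x - ∑ u ∈ U, γ x u • u) + ∑ u ∈ U, γ x u • E u := by
    rw [h1, map_sum]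
    simp only [hE, smul_sub, map_sub, map_smul, Finset.sum_sub_distrib,
      ← Finset.sum_smul, hsum, one_smul]
    abel
  rw [h2]
  calc ‖L (x - ∑ u ∈ U, γ x u • u) + ∑ u ∈ U, γ x u • E u‖
      ≤ ‖L (x - ∑ u ∈ U, γ x u • u)‖ + ‖∑ u ∈ U, γ x u • E u‖ := norm_add_le _ _
    _ ≤ α * ‖x - ∑ u ∈ U, γ x u • u‖ + β * ∑ u ∈ U, γ x u * ‖x - u‖ ^ (1 + p) := by
        gcongr ?_ + ?_
        · exact le_trans (L.le_opNorm _) (by gcongr)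
        · calc ‖∑ u ∈ U, γ x u • E u‖ ≤ ∑ u ∈ U, ‖γ x u • E u‖ := norm_sum_le _ _
            _ ≤ ∑ u ∈ U, γ x u * (β * ‖x - u‖ ^ (1 + p)) := by
                refine Finset.sum_le_sum fun u hu => ?_
                rw [norm_smul, Real.norm_eq_abs, abs_of_nonneg (hγ u hu)]
                exact mul_le_mul_of_nonneg_left (hEnorm u) (hγ u hu)
            _ = β * ∑ u ∈ U, γ x u * ‖x - u‖ ^ (1 + p) := by
                rw [Finset.mul_sum]; exact Finset.sum_congr rfl fun u _ => by ring
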